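/- The satisfiability problem for the logic D is PSPACE-hard. -/

import Mathlib

namespace DLogic

/-- Integer terms of the logic D (rows are flattened into tuples of integers;
`col d i` is de Bruijn-style access to column `i` of the row bound by the
`d`-th enclosing selection). -/
inductive Term : Type
  | var : ℕ → Term
  | col : ℕ → ℕ → Term
  | const : ℤ → Term
  | add : Term → Term → Term
  | mul : ℤ → Term → Term

mutual
  /-- Table expressions of D. -/
  inductive Table : Type
    | input : List (List Term) → Table
    | sel : Formula → Table → Table
    | prod : Table → Table → Table
    | union : Table → Table → Table
  /-- Formulas of D. -/
  inductive Formula : Type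
    | le : Term → Term → Formula
    | nonempty : Table → Formula
    | not : Formula → Formula
    | or : Formula → Formula → Formula
end

def Term.eval (env : ℕ → ℤ) (stk : List (List ℤ)) : Term → ℤ
  | .var n => env n
  | .col d i => (stk.getD d []).getD i 0
  | .const k => k
  | .add a b => a.eval env stk + b.eval env stk
  | .mul k t => k * t.eval env stk

mutual
  /-- The finite set (list) of rows denoted by a table expression. -/
  def Table.eval (env : ℕ → ℤ) (stk : List (List ℤ)) : Table → List (List ℤ)
    | .input rows => rows.map (fun r => r.map (fun t => t.eval env stk))
    | .sel F D => (D.eval env stk).filter (fun r => F.eval env (r :: stk))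
    | .prod D₁ D₂ =>
        (D₁.eval env stk).flatMap (fun r₁ => (D₂.eval env stk).map (fun r₂ => r₁ ++ r₂))
    | .union D₁ D₂ => D₁.eval env stk ++ D₂.eval env stk
  /-- Truth value of a D formula. -/
  def Formula.eval (env : ℕ → ℤ) (stk : List (List ℤ)) : Formula → Bool
    | .le t₁ t₂ => decide (t₁.eval env stk ≤ t₂.eval env stk)
    | .nonempty D => !(D.eval env stk).isEmpty
    | .not F => !(F.eval env stk)
    | .or F₁ F₂ => F₁.eval env stk || F₂.eval env stk
end

/-- Satisfiability of a D formula. -/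
def Satisfiable (F : Formula) : Prop := ∃ env : ℕ → ℤ, F.eval env [] = true

end DLogic

namespace DLogic

def Term.size : Term → ℕ
  | .var _ => 1
  | .col _ _ => 1
  | .const _ => 1
  | .add a b => a.size + b.size + 1
  | .mul _ t => t.size + 1

mutual
  def Table.size : Table → ℕ
    | .input rows => 1 + (rows.map (fun r => 1 + (r.map Term.size).sum)).sum
    | .sel F D => 1 + F.size + D.size
    | .prod D₁ D₂ => 1 + D₁.size + D₂.size
    | .union D₁ D₂ => 1 + D₁.size + D₂.size
  def Formula.size : Formula → ℕ
    | .le t₁ t₂ => 1 + t₁.size + t₂.size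
    | .nonempty D => 1 + D.size
    | .not F => 1 + F.size
    | .or F₁ F₂ => 1 + F₁.size + F₂.size
end

/-- Derived equality `t₁ = t₂` in D: `t₁ ≤ t₂ ∧ t₂ ≤ t₁`. -/
def Formula.eq (t₁ t₂ : Term) : Formula :=
  .not (.or (.not (.le t₁ t₂)) (.not (.le t₂ t₁)))

/-- Quantified Boolean formulas (closed QBF, de Bruijn indices for
quantified Boolean variables). -/
inductive QBF : Type
  | var : ℕ → QBF
  | not : QBF → QBF
  | or : QBF → QBF → QBF
  | forall_ : QBF → QBF
  | exists_ : QBF → QBF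

def QBF.eval (stk : List Bool) : QBF → Bool
  | .var n => stk.getD n false
  | .not q => !(q.eval stk)
  | .or q₁ q₂ => q₁.eval stk || q₂.eval stk
  | .forall_ q => q.eval (false :: stk) && q.eval (true :: stk)
  | .exists_ q => q.eval (false :: stk) || q.eval (true :: stk)

def QBF.size : QBF → ℕ
  | .var _ => 1
  | .not q => 1 + q.size
  | .or q₁ q₂ => 1 + q₁.size + q₂.size
  | .forall_ q => 1 + q.size
  | .exists_ q => 1 + q.size

/-- The one-column table `B = {0, 1}`. -/
def boolTable : Table := .input [[.const 0], [.const 1]]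

/-- The encoding of QBF into D: `∃x.φ` becomes `∃̇ σx.(enc φ)({0,1})`,
`∀x.φ` becomes `¬∃̇ σx.(¬ enc φ)({0,1})`, and a Boolean variable becomes
the comparison of the corresponding (σ-bound) integer variable with 1. -/
def QBF.enc : QBF → Formula
  | .var n => Formula.eq (.col n 0) (.const 1)
  | .not q => .not q.enc
  | .or q₁ q₂ => .or q₁.enc q₂.enc
  | .forall_ q => .not (.nonempty (.sel (.not q.enc) boolTable))
  | .exists_ q => .nonempty (.sel q.enc boolTable)

end DLogic

/-!
A stack of Boolean values is represented in D by the stack of one-column rows `[0]` / `[1]`.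
Under this representation a selection from `B = {0, 1}` followed by `∃̇` is exactly a
disjunction over the two values of the newly bound variable, so `QBF.enc` commutes with
evaluation connective by connective; for a closed formula the free integer variables are never
read, which turns truth of `q` into satisfiability of `q.enc`. Each connective costs a bounded
number of symbols, so the encoding is linear in size.
-/

namespace DLogic

theorem Formula.eval_eq (env : ℕ → ℤ) (stk : List (List ℤ)) (t₁ t₂ : Term) :
    (Formula.eq t₁ t₂).eval env stk = decide (t₁.eval env stk = t₂.eval env stk) := by
  simp only [Formula.eq, Formula.eval, Bool.not_or, Bool.not_not, le_antisymm_iff,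
    Bool.decide_and]

theorem Formula.eval_nonempty_sel_boolTable (env : ℕ → ℤ) (stk : List (List ℤ)) (F : Formula) :
    (Formula.nonempty (.sel F boolTable)).eval env stk =
      (F.eval env ([0] :: stk) || F.eval env ([1] :: stk)) := by
  simp only [Formula.eval, Table.eval, boolTable, Term.eval, List.map, List.filter]
  cases F.eval env ([0] :: stk) <;> cases F.eval env ([1] :: stk) <;> rfl

def boolStack (stk : List Bool) : List (List ℤ) :=
  stk.map fun b => [if b then 1 else 0]

@[simp]
theorem boolStack_nil : boolStack [] = [] := rfl

@[simp]
theorem boolStack_cons (b : Bool) (stk : List Bool) :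
    boolStack (b :: stk) = [if b then 1 else 0] :: boolStack stk := rfl

theorem Term.eval_col_boolStack (env : ℕ → ℤ) (stk : List Bool) (n : ℕ) :
    (Term.col n 0).eval env (boolStack stk) = if stk.getD n false then 1 else 0 := by
  induction stk generalizing n with
  | nil => simp [Term.eval]
  | cons b stk ih =>
    cases n with
    | zero => cases b <;> simp [Term.eval]
    | succ n => simpa [Term.eval] using ih n

theorem QBF.eval_enc (env : ℕ → ℤ) (q : QBF) (stk : List Bool) :
    q.enc.eval env (boolStack stk) = q.eval stk := by
  induction q generalizing stk with
  | var n =>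
    rw [QBF.enc, Formula.eval_eq, Term.eval_col_boolStack, QBF.eval]
    cases stk.getD n false <;> simp [Term.eval]
  | not q ih => simp only [QBF.enc, QBF.eval, Formula.eval, ih]
  | or q₁ q₂ ih₁ ih₂ => simp only [QBF.enc, QBF.eval, Formula.eval, ih₁, ih₂]
  | forall_ q ih =>
    have ih₀ := ih (false :: stk)
    have ih₁ := ih (true :: stk)
    simp only [boolStack_cons, Bool.false_eq_true, if_true, if_false] at ih₀ ih₁
    rw [QBF.enc, QBF.eval, Formula.eval, Formula.eval_nonempty_sel_boolTable]
    simp only [Formula.eval, ih₀, ih₁, Bool.not_or, Bool.not_not]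
  | exists_ q ih =>
    have ih₀ := ih (false :: stk)
    have ih₁ := ih (true :: stk)
    simp only [boolStack_cons, Bool.false_eq_true, if_true, if_false] at ih₀ ih₁
    simp only [QBF.enc, QBF.eval, Formula.eval_nonempty_sel_boolTable, ih₀, ih₁]

theorem QBF.eval_nil_iff_satisfiable_enc (q : QBF) :
    q.eval [] = true ↔ Satisfiable q.enc := by
  have h (env : ℕ → ℤ) : q.enc.eval env [] = q.eval [] := q.eval_enc env []
  exact ⟨fun hq => ⟨fun _ => 0, (h _).trans hq⟩, fun ⟨env, henv⟩ => (h env).symm.trans henv⟩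

theorem QBF.size_enc_le (q : QBF) : q.enc.size ≤ 10 * q.size := by
  induction q with
  | var n => simp [QBF.enc, QBF.size, Formula.eq, Formula.size, Term.size]
  | not q ih => simp only [QBF.enc, QBF.size, Formula.size]; omega
  | or q₁ q₂ ih₁ ih₂ => simp only [QBF.enc, QBF.size, Formula.size]; omega
  | forall_ q ih =>
    simp only [QBF.enc, QBF.size, Formula.size, Table.size, boolTable, Term.size, List.map,
      List.sum_cons, List.sum_nil]
    omega
  | exists_ q ih =>
    simp only [QBF.enc, QBF.size, Formula.size, Table.size, boolTable, Term.size, List.map,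
      List.sum_cons, List.sum_nil]
    omega

end DLogic

/-- The satisfiability problem for D is PSPACE-hard:
the (PSPACE-complete) QBF problem reduces to D-satisfiability via the
polynomial-size encoding `QBF.enc`. -/
theorem DLogic.satisfiability_PSPACE_hard :
    (∀ q : DLogic.QBF, (q.eval [] = true ↔ DLogic.Satisfiable q.enc)) ∧
    (∃ c k : ℕ, ∀ q : DLogic.QBF, q.enc.size ≤ c * (q.size + 1) ^ k) :=
  ⟨DLogic.QBF.eval_nil_iff_satisfiable_enc,
    ⟨10, 1, fun q => (q.size_enc_le).trans (by rw [pow_one]; omega)⟩⟩
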